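/- For the model hypersurface given by the complex defining equation w = \bar w + 2i(|z|^2 + Re(z^2\bar ζ))/(1−|ζ|^2) =: θ(z,ζ,\bar z,\bar ζ,\bar w), the Levi determinant det[[θ_{\bar z}, θ_{\bar ζ}, θ_{\bar w}],[θ_{z\bar z}, θ_{z\bar ζ}, θ_{z\bar w}],[θ_{ζ\bar z}, θ_{ζ\bar ζ}, θ_{ζ\bar w}]] vanishes identically (for |ζ| < 1), so the model is everywhere Levi degenerate. -/

import Mathlib

open Complex Matrix

/-- The complex defining function of the model:
`θ(z,ζ,z̄,ζ̄,w̄) = w̄ + 2i(zz̄ + (z²ζ̄ + z̄²ζ)/2)/(1 - ζζ̄)`,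
viewed as a function of five independent complex variables. -/
noncomputable def theta (z ζ zb ζb wb : ℂ) : ℂ :=
  wb + 2 * I * (z * zb + (z ^ 2 * ζb + zb ^ 2 * ζ) / 2) / (1 - ζ * ζb)

noncomputable def theta_zb (z ζ zb ζb wb : ℂ) : ℂ :=
  deriv (fun t => theta z ζ t ζb wb) zb

noncomputable def theta_ζb (z ζ zb ζb wb : ℂ) : ℂ :=
  deriv (fun t => theta z ζ zb t wb) ζb

noncomputable def theta_wb (z ζ zb ζb wb : ℂ) : ℂ :=
  deriv (fun t => theta z ζ zb ζb t) wb

noncomputable def theta_z_zb (z ζ zb ζb wb : ℂ) : ℂ :=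
  deriv (fun s => theta_zb s ζ zb ζb wb) z

noncomputable def theta_z_ζb (z ζ zb ζb wb : ℂ) : ℂ :=
  deriv (fun s => theta_ζb s ζ zb ζb wb) z

noncomputable def theta_z_wb (z ζ zb ζb wb : ℂ) : ℂ :=
  deriv (fun s => theta_wb s ζ zb ζb wb) z

noncomputable def theta_ζ_zb (z ζ zb ζb wb : ℂ) : ℂ :=
  deriv (fun s => theta_zb z s zb ζb wb) ζ

noncomputable def theta_ζ_ζb (z ζ zb ζb wb : ℂ) : ℂ :=
  deriv (fun s => theta_ζb z s zb ζb wb) ζ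

noncomputable def theta_ζ_wb (z ζ zb ζb wb : ℂ) : ℂ :=
  deriv (fun s => theta_wb z s zb ζb wb) ζ

/-- First derivative in `z̄`: `θ_z̄ = 2i(z + z̄ζ)/(1 - ζζ̄)`.
This holds unconditionally (when the denominator vanishes both sides are `0`). -/
lemma L_zb (z ζ zb ζb wb : ℂ) :
    theta_zb z ζ zb ζb wb = 2 * I * (z + zb * ζ) / (1 - ζ * ζb) := by
  unfold theta_zb theta
  by_cases hD : (1 : ℂ) - ζ * ζb = 0
  · simp [hD]
  · have ha : HasDerivAt (fun t : ℂ => z * t) z zb := by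
      simpa using (hasDerivAt_id zb).const_mul z
    have hb : HasDerivAt (fun t : ℂ => t ^ 2 * ζ) (2 * zb * ζ) zb := by
      simpa [mul_comm, mul_assoc] using (hasDerivAt_pow 2 zb).mul_const ζ
    have h2 : HasDerivAt (fun t : ℂ => z * t + (z ^ 2 * ζb + t ^ 2 * ζ) / 2)
        (z + 2 * zb * ζ / 2) zb := ha.add ((hb.const_add (z ^ 2 * ζb)).div_const 2)
    have h3 := (((h2.const_mul (2 * I)).div_const (1 - ζ * ζb)).const_add wb)
    rw [h3.deriv]
    field_simp

/-- First derivative in `ζ̄`: `θ_ζ̄ = i(z + z̄ζ)²/(1 - ζζ̄)²`. -/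
lemma L_zeb (z ζ zb ζb wb : ℂ) (hD : (1 : ℂ) - ζ * ζb ≠ 0) :
    theta_ζb z ζ zb ζb wb = I * (z + zb * ζ) ^ 2 / (1 - ζ * ζb) ^ 2 := by
  unfold theta_ζb theta
  have hnum : HasDerivAt (fun t : ℂ => 2 * I * (z * zb + (z ^ 2 * t + zb ^ 2 * ζ) / 2))
      (2 * I * (z ^ 2 / 2)) ζb := by
    have h1 : HasDerivAt (fun t : ℂ => z ^ 2 * t) (z ^ 2) ζb := by
      simpa using (hasDerivAt_id ζb).const_mul (z ^ 2)
    exact ((((h1.add_const (zb ^ 2 * ζ)).div_const 2).const_add (z * zb)).const_mul (2 * I))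
  have hden : HasDerivAt (fun t : ℂ => 1 - ζ * t) (-ζ) ζb := by
    simpa using ((hasDerivAt_id ζb).const_mul ζ).const_sub 1
  have h3 := ((hnum.fun_div hden hD).const_add wb)
  rw [h3.deriv]
  field_simp
  ring

/-- First derivative in `w̄`: `θ_w̄ = 1`. -/
lemma L_wb (z ζ zb ζb wb : ℂ) : theta_wb z ζ zb ζb wb = 1 := by
  unfold theta_wb theta
  exact ((hasDerivAt_id wb).add_const _).deriv

lemma L_z_zb (z ζ zb ζb wb : ℂ) (hD : (1 : ℂ) - ζ * ζb ≠ 0) :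
    theta_z_zb z ζ zb ζb wb = 2 * I / (1 - ζ * ζb) := by
  unfold theta_z_zb
  have hfe : (fun s => theta_zb s ζ zb ζb wb)
      = fun s => 2 * I * (s + zb * ζ) / (1 - ζ * ζb) :=
    funext fun s => L_zb s ζ zb ζb wb
  rw [hfe]
  have h1 : HasDerivAt (fun s : ℂ => 2 * I * (s + zb * ζ) / (1 - ζ * ζb))
      (2 * I * 1 / (1 - ζ * ζb)) z :=
    (((hasDerivAt_id z).add_const (zb * ζ)).const_mul (2 * I)).div_const _
  rw [h1.deriv, mul_one]

lemma L_z_zeb (z ζ zb ζb wb : ℂ) (hD : (1 : ℂ) - ζ * ζb ≠ 0) :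
    theta_z_ζb z ζ zb ζb wb = 2 * I * (z + zb * ζ) / (1 - ζ * ζb) ^ 2 := by
  unfold theta_z_ζb
  have hfe : (fun s => theta_ζb s ζ zb ζb wb)
      = fun s => I * (s + zb * ζ) ^ 2 / (1 - ζ * ζb) ^ 2 :=
    funext fun s => L_zeb s ζ zb ζb wb hD
  rw [hfe]
  have h0 : HasDerivAt (fun s : ℂ => (s + zb * ζ) ^ 2) (2 * (z + zb * ζ)) z := by
    simpa using ((hasDerivAt_id z).add_const (zb * ζ)).fun_pow 2
  have h1 := ((h0.const_mul I).div_const ((1 - ζ * ζb) ^ 2))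
  rw [h1.deriv]
  ring

lemma L_z_wb (z ζ zb ζb wb : ℂ) : theta_z_wb z ζ zb ζb wb = 0 := by
  unfold theta_z_wb
  have hfe : (fun s => theta_wb s ζ zb ζb wb) = fun _ => (1 : ℂ) :=
    funext fun s => L_wb s ζ zb ζb wb
  rw [hfe, deriv_const]

lemma L_ze_zb (z ζ zb ζb wb : ℂ) (hD : (1 : ℂ) - ζ * ζb ≠ 0) :
    theta_ζ_zb z ζ zb ζb wb = 2 * I * (zb + z * ζb) / (1 - ζ * ζb) ^ 2 := by
  unfold theta_ζ_zb
  have hfe : (fun s => theta_zb z s zb ζb wb)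
      = fun s => 2 * I * (z + zb * s) / (1 - s * ζb) :=
    funext fun s => L_zb z s zb ζb wb
  rw [hfe]
  have hnum : HasDerivAt (fun s : ℂ => 2 * I * (z + zb * s)) (2 * I * zb) ζ := by
    simpa using (((hasDerivAt_id ζ).const_mul zb).const_add z).const_mul (2 * I)
  have hden : HasDerivAt (fun s : ℂ => 1 - s * ζb) (-ζb) ζ := by
    simpa using ((hasDerivAt_id ζ).mul_const ζb).const_sub 1
  have h1 := hnum.fun_div hden hD
  rw [h1.deriv]
  field_simp
  ring

lemma L_ze_zeb (z ζ zb ζb wb : ℂ) (hD : (1 : ℂ) - ζ * ζb ≠ 0) :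
    theta_ζ_ζb z ζ zb ζb wb
      = 2 * I * (z + zb * ζ) * (zb + z * ζb) / (1 - ζ * ζb) ^ 3 := by
  unfold theta_ζ_ζb
  have hcont : ContinuousAt (fun s : ℂ => 1 - s * ζb) ζ := by fun_prop
  have hev : ∀ᶠ s in nhds ζ, (1 : ℂ) - s * ζb ≠ 0 := hcont.eventually_ne hD
  have hfe : (fun s => theta_ζb z s zb ζb wb)
      =ᶠ[nhds ζ] fun s => I * (z + zb * s) ^ 2 / (1 - s * ζb) ^ 2 :=
    hev.mono fun s hs => L_zeb z s zb ζb wb hs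
  rw [hfe.deriv_eq]
  have hnum : HasDerivAt (fun s : ℂ => I * (z + zb * s) ^ 2)
      (I * (2 * (z + zb * ζ) * zb)) ζ := by
    have h0 : HasDerivAt (fun s : ℂ => (z + zb * s) ^ 2) (2 * (z + zb * ζ) * zb) ζ := by
      simpa [mul_comm] using (((hasDerivAt_id ζ).const_mul zb).const_add z).fun_pow 2
    exact h0.const_mul I
  have hden : HasDerivAt (fun s : ℂ => ((1 : ℂ) - s * ζb) ^ 2)
      (2 * (1 - ζ * ζb) * (-ζb)) ζ := by
    have h0 : HasDerivAt (fun s : ℂ => (1 : ℂ) - s * ζb) (-ζb) ζ := by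
      simpa using ((hasDerivAt_id ζ).mul_const ζb).const_sub 1
    simpa [mul_comm] using h0.fun_pow 2
  have h1 := hnum.fun_div hden (pow_ne_zero 2 hD)
  rw [h1.deriv]
  field_simp
  ring

lemma L_ze_wb (z ζ zb ζb wb : ℂ) : theta_ζ_wb z ζ zb ζb wb = 0 := by
  unfold theta_ζ_wb
  have hfe : (fun s => theta_wb z s zb ζb wb) = fun _ => (1 : ℂ) :=
    funext fun s => L_wb z s zb ζb wb
  rw [hfe, deriv_const]

/-- the Levi determinant of the model hypersurface vanishes
identically (for `ζζ̄ ≠ 1`), so the model is everywhere Levi degenerate. -/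
theorem model_levi_determinant_vanishes (z ζ zb ζb wb : ℂ) (h : ζ * ζb ≠ 1) :
    (!![theta_zb z ζ zb ζb wb, theta_ζb z ζ zb ζb wb, theta_wb z ζ zb ζb wb;
        theta_z_zb z ζ zb ζb wb, theta_z_ζb z ζ zb ζb wb, theta_z_wb z ζ zb ζb wb;
        theta_ζ_zb z ζ zb ζb wb, theta_ζ_ζb z ζ zb ζb wb, theta_ζ_wb z ζ zb ζb wb] : Matrix (Fin 3) (Fin 3) ℂ).det = 0 := by
  have hD : (1 : ℂ) - ζ * ζb ≠ 0 := sub_ne_zero_of_ne (Ne.symm h)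
  rw [Matrix.det_fin_three]
  simp only [Matrix.cons_val_zero, Matrix.cons_val_one, Matrix.head_cons,
    Matrix.cons_val_two, Matrix.tail_cons, Matrix.head_fin_const,
    Matrix.cons_val', Matrix.empty_val', Matrix.cons_val_fin_one, Matrix.of_apply]
  rw [L_zb, L_zeb z ζ zb ζb wb hD, L_wb, L_z_zb z ζ zb ζb wb hD,
    L_z_zeb z ζ zb ζb wb hD, L_z_wb, L_ze_zb z ζ zb ζb wb hD,
    L_ze_zeb z ζ zb ζb wb hD, L_ze_wb]
  field_simp
  ring
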